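/- If a solitary wave in 𝒲 satisfies u_x < 0 at every point of Ω⁺ ∪ S⁺, then the supremum of |v/u| over the closure of Ω is strictly less than 1. -/

import Mathlib

open Set

/-- Partial derivative in the horizontal direction. -/
noncomputable def pdX (f : ℝ × ℝ → ℝ) (p : ℝ × ℝ) : ℝ := fderiv ℝ f p (1, 0)

/-- Partial derivative in the vertical direction. -/
noncomputable def pdY (f : ℝ × ℝ → ℝ) (p : ℝ × ℝ) : ℝ := fderiv ℝ f p (0, 1)

/-- A symmetric steady solitary gravity water wave with vorticity, in the frame moving
with the wave.  The fluid occupies `Ω = {(x,y) : x ∈ ℝ, -d < y < η x}`; `u, v` are the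
relative velocity components, `P` is the pressure, `η` the surface profile, `uInf` the
asymptotic horizontal velocity, `ψ` the stream function and `γ` the vorticity
function. -/
structure SolitaryWave (g Patm : ℝ) : Type where
  u : ℝ × ℝ → ℝ
  v : ℝ × ℝ → ℝ
  P : ℝ × ℝ → ℝ
  η : ℝ → ℝ
  uInf : ℝ → ℝ
  ψ : ℝ × ℝ → ℝ
  γ : ℝ → ℝ
  d : ℝ
  m : ℝ
  d_pos : 0 < d
  m_pos : 0 < m
  u_smooth : ContDiff ℝ 3 u
  v_smooth : ContDiff ℝ 3 v
  P_smooth : ContDiff ℝ 3 P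
  η_smooth : ContDiff ℝ 4 η
  uInf_smooth : ContDiff ℝ 3 uInf
  ψ_smooth : ContDiff ℝ 4 ψ
  γ_smooth : ContDiffOn ℝ 2 γ (Icc 0 m)
  u_bdd : ∀ k : ℕ, k ≤ 3 → ∃ C, ∀ p, ‖iteratedFDeriv ℝ k u p‖ ≤ C
  v_bdd : ∀ k : ℕ, k ≤ 3 → ∃ C, ∀ p, ‖iteratedFDeriv ℝ k v p‖ ≤ C
  P_bdd : ∀ k : ℕ, k ≤ 3 → ∃ C, ∀ p, ‖iteratedFDeriv ℝ k P p‖ ≤ C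
  η_bdd : ∀ k : ℕ, k ≤ 4 → ∃ C, ∀ x, |iteratedDeriv k η x| ≤ C
  u_even : ∀ x y, u (-x, y) = u (x, y)
  v_odd : ∀ x y, v (-x, y) = -v (x, y)
  P_even : ∀ x y, P (-x, y) = P (x, y)
  η_even : ∀ x, η (-x) = η x
  euler_x : ∀ x y, -d < y → y < η x →
    u (x, y) * pdX u (x, y) + v (x, y) * pdY u (x, y) = -pdX P (x, y)
  euler_y : ∀ x y, -d < y → y < η x →
    u (x, y) * pdX v (x, y) + v (x, y) * pdY v (x, y) = -(pdY P (x, y)) - g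
  incompressible : ∀ x y, -d < y → y < η x → pdX u (x, y) + pdY v (x, y) = 0
  surface_pressure : ∀ x, P (x, η x) = Patm
  surface_kinematic : ∀ x, v (x, η x) = deriv η x * u (x, η x)
  bed_kinematic : ∀ x, v (x, -d) = 0
  nonstagnant : ∃ δ > 0, ∀ x y, -d ≤ y → y ≤ η x → u (x, y) ≤ -δ
  psi_x : ∀ x y, -d ≤ y → y ≤ η x → pdX ψ (x, y) = -v (x, y)
  psi_y : ∀ x y, -d ≤ y → y ≤ η x → pdY ψ (x, y) = u (x, y)
  psi_surface : ∀ x, ψ (x, η x) = 0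
  psi_bed : ∀ x, ψ (x, -d) = m
  vorticity_eq : ∀ x y, -d < y → y < η x → pdX v (x, y) - pdY u (x, y) = γ (ψ (x, y))
  /-- Asymptotic conditions: uniformly in `y` as `x → ±∞`, `η → 0`, `Dᵏ v → 0` and
  `Dᵏ u → Dᵏ uInf` for all partial derivatives of order `k = 0, 1, 2`. -/
  asymptotic : ∀ ε > 0, ∃ R, ∀ x y, R ≤ |x| → -d ≤ y → y ≤ η x →
    |η x| < ε ∧
    |v (x, y)| < ε ∧ |pdX v (x, y)| < ε ∧ |pdY v (x, y)| < ε ∧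
    |pdX (pdX v) (x, y)| < ε ∧ |pdY (pdX v) (x, y)| < ε ∧ |pdY (pdY v) (x, y)| < ε ∧
    |u (x, y) - uInf y| < ε ∧ |pdX u (x, y)| < ε ∧ |pdY u (x, y) - deriv uInf y| < ε ∧
    |pdX (pdX u) (x, y)| < ε ∧ |pdY (pdX u) (x, y)| < ε ∧
    |pdY (pdY u) (x, y) - deriv (deriv uInf) y| < ε

namespace SolitaryWave

variable {g Patm : ℝ}

/-- The closure of the fluid domain `Ω`. -/
def Ωbar (W : SolitaryWave g Patm) : Set (ℝ × ℝ) :=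
  {p | -W.d ≤ p.2 ∧ p.2 ≤ W.η p.1}

/-- The open right half `Ω⁺` of the fluid domain. -/
def Ωplus (W : SolitaryWave g Patm) : Set (ℝ × ℝ) :=
  {p | 0 < p.1 ∧ -W.d < p.2 ∧ p.2 < W.η p.1}

/-- The right half `S⁺` of the free surface. -/
def Splus (W : SolitaryWave g Patm) : Set (ℝ × ℝ) :=
  {p | 0 < p.1 ∧ p.2 = W.η p.1}

/-- A solitary wave is trivial if `v ≡ 0`, `η ≡ 0` and `u (x, y) = uInf y`. -/
def IsTrivial (W : SolitaryWave g Patm) : Prop :=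
  (∀ p, W.v p = 0) ∧ (∀ x, W.η x = 0) ∧ (∀ x y, W.u (x, y) = W.uInf y)

/-- The streamline monotonicity condition `v > 0` on `Ω⁺ ∪ S⁺`. -/
def MonotoneHalf (W : SolitaryWave g Patm) : Prop :=
  ∀ p ∈ W.Ωplus ∪ W.Splus, 0 < W.v p

/-- Membership in the water-wave set 𝒲 : the vorticity function satisfies
`γ ≤ 0`, `γ' ≤ 0`, `γ'' ≤ 0` on `[0, m]`, and the wave is either trivial or
monotone. -/
def MemW (W : SolitaryWave g Patm) : Prop :=
  (∀ s ∈ Icc (0:ℝ) W.m, W.γ s ≤ 0) ∧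
  (∀ s ∈ Icc (0:ℝ) W.m, derivWithin W.γ (Icc 0 W.m) s ≤ 0) ∧
  (∀ s ∈ Icc (0:ℝ) W.m, derivWithin (derivWithin W.γ (Icc 0 W.m)) (Icc 0 W.m) s ≤ 0) ∧
  (W.IsTrivial ∨ W.MonotoneHalf)

/-- The trace of `(u, v, u_x, v_x, u_y, u_xx, u_xy)` on the free surface. -/
noncomputable def trace (W : SolitaryWave g Patm) (x : ℝ) :
    ℝ × ℝ × ℝ × ℝ × ℝ × ℝ × ℝ :=
  (W.u (x, W.η x), W.v (x, W.η x), pdX W.u (x, W.η x), pdX W.v (x, W.η x),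
    pdY W.u (x, W.η x), pdX (pdX W.u) (x, W.η x), pdY (pdX W.u) (x, W.η x))

end SolitaryWave

/-!
Far out, `|v/u|` is small because `v → 0` while `u ≤ -δ`, so by symmetry it suffices to show
that the maximum `S` of `|v/u|` over a compact piece of the right half is `< 1`. If `S ≥ 1`,
the maximum point `p₀` lies in `Ω⁺ ∪ S⁺` (`v` vanishes on the axis and on the bed), where
`v > 0`; hence `w = v + S u ≤ 0` attains its maximum `0` at `p₀`. In the interior this gives
`∇w = 0`. On the surface the kinematic condition makes the surface slope `-S`, so the derivative
of `w` along the surface vanishes and `w_y ≥ 0`. With `u_x + v_y = 0` and `v_x - u_y = γ(ψ) ≤ 0`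
either case forces `u_x ≥ 0`.
-/

lemma IsClosed.apply_mem_of_forall_mem_Ioo {C : Set ℝ} (hC : IsClosed C) {F : ℝ → ℝ}
    (hF : Continuous F) {a b : ℝ} (hab : a < b) (h : ∀ t ∈ Ioo a b, F t ∈ C) : F b ∈ C :=
  hC.closure_eq ▸ MapsTo.closure h hF (by rw [closure_Ioo hab.ne]; exact right_mem_Icc.2 hab.le)

section PartialDerivatives

variable {f : ℝ × ℝ → ℝ} {x y : ℝ}

lemma continuous_pdX {n : WithTop ℕ∞} (hf : ContDiff ℝ n f) (hn : n ≠ 0) : Continuous (pdX f) :=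
  (hf.continuous_fderiv hn).clm_apply continuous_const

lemma continuous_pdY {n : WithTop ℕ∞} (hf : ContDiff ℝ n f) (hn : n ≠ 0) : Continuous (pdY f) :=
  (hf.continuous_fderiv hn).clm_apply continuous_const

lemma hasDerivAt_graph {φ : ℝ → ℝ} {φ' : ℝ} (hf : DifferentiableAt ℝ f (x, φ x))
    (hφ : HasDerivAt φ φ' x) :
    HasDerivAt (fun t => f (t, φ t)) (pdX f (x, φ x) + φ' * pdY f (x, φ x)) x := by
  have h := hf.hasFDerivAt.comp_hasDerivAt x ((hasDerivAt_id x).prodMk hφ)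
  rwa [show ((1 : ℝ), φ') = (1, 0) + φ' • (0, 1) by simp, map_add, map_smul] at h

lemma hasDerivAt_vertical (hf : DifferentiableAt ℝ f (x, y)) :
    HasDerivAt (fun t => f (x, t)) (pdY f (x, y)) y :=
  hf.hasFDerivAt.comp_hasDerivAt y ((hasDerivAt_const y x).prodMk (hasDerivAt_id y))

lemma pdY_nonneg_of_isMaxOn {s : Set (ℝ × ℝ)} {a : ℝ} (hay : a < y)
    (hseg : ∀ t ∈ Icc a y, (x, t) ∈ s) (hf : DifferentiableAt ℝ f (x, y))
    (hmax : IsMaxOn f s (x, y)) : 0 ≤ pdY f (x, y) := by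
  have hcone : (x, a) - (x, y) ∈ posTangentConeAt s (x, y) := by
    refine sub_mem_posTangentConeAt_of_segment_subset fun ⟨px, t⟩ hp => ?_
    obtain ⟨hpx, ht⟩ := Prod.segment_subset (x, y) (x, a) hp
    obtain rfl : px = x := by simpa using hpx
    rw [segment_symm, segment_eq_Icc hay.le] at ht
    exact hseg t ht
  have h := hmax.localize.hasFDerivWithinAt_nonpos hf.hasFDerivAt.hasFDerivWithinAt hcone
  rw [show (x, a) - (x, y) = (a - y) • ((0 : ℝ), (1 : ℝ)) by simp, map_smul, smul_eq_mul] at h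
  exact nonneg_of_mul_nonpos_right h (sub_neg.2 hay)

end PartialDerivatives

lemma nonneg_of_slope_conditions {S ux uy vx vy : ℝ} (hS : 1 ≤ S) (hinc : ux + vy = 0)
    (hvort : vx - uy ≤ 0) (htan : vx + S * ux = S * (vy + S * uy))
    (hnormal : 0 ≤ vy + S * uy) : 0 ≤ ux := by
  nlinarith [mul_nonneg hnormal (by nlinarith : 0 ≤ S * S - 1)]

lemma IsCompact.exists_lt_forall_le {α : Type*} [TopologicalSpace α] {K : Set α}
    (hK : IsCompact K) {f : α → ℝ} (hf : ContinuousOn f K) {b : ℝ}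
    (hmax : ∀ p ∈ K, IsMaxOn f K p → f p < b) : ∃ c < b, ∀ p ∈ K, f p ≤ c := by
  rcases K.eq_empty_or_nonempty with rfl | hne
  · exact ⟨b - 1, by linarith, by simp⟩
  obtain ⟨p, hp, hpmax⟩ := hK.exists_isMaxOn hne hf
  exact ⟨f p, hmax p hp hpmax, fun q hq => hpmax hq⟩

namespace SolitaryWave

variable {g Patm : ℝ} (W : SolitaryWave g Patm)

lemma u_neg {p : ℝ × ℝ} (hp : p ∈ W.Ωbar) : W.u p < 0 := by
  obtain ⟨δ, hδ, hu⟩ := W.nonstagnant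
  exact (hu p.1 p.2 hp.1 hp.2).trans_lt (neg_neg_of_pos hδ)

lemma v_zero_fst (y : ℝ) : W.v (0, y) = 0 := by
  have h := W.v_odd 0 y
  rw [neg_zero] at h
  linarith

lemma continuousOn_abs_v_div_u : ContinuousOn (fun p => |W.v p / W.u p|) W.Ωbar :=
  (W.v_smooth.continuous.continuousOn.div W.u_smooth.continuous.continuousOn
    fun _ hp => (W.u_neg hp).ne).abs

lemma exists_abs_v_div_u_le {ε : ℝ} (hε : 0 < ε) :
    ∃ R, ∀ p ∈ W.Ωbar, R ≤ |p.1| → |W.v p / W.u p| ≤ ε := by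
  obtain ⟨δ, hδ, hu⟩ := W.nonstagnant
  obtain ⟨R, hR⟩ := W.asymptotic (ε * δ) (mul_pos hε hδ)
  refine ⟨R, fun p hp hpR => ?_⟩
  have hv := (hR p.1 p.2 hpR hp.1 hp.2).2.1
  have hup := hu p.1 p.2 hp.1 hp.2
  rw [abs_div, div_le_iff₀ (abs_pos.2 (W.u_neg hp).ne), abs_of_neg (W.u_neg hp)]
  nlinarith

lemma mem_Ωbar_abs_fst {p : ℝ × ℝ} (hp : p ∈ W.Ωbar) : (|p.1|, p.2) ∈ W.Ωbar := by
  rcases abs_choice p.1 with h | h <;> rw [h]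
  · exact hp
  · exact ⟨hp.1, (W.η_even p.1).symm ▸ hp.2⟩

lemma abs_v_div_u_abs_fst (p : ℝ × ℝ) :
    |W.v (|p.1|, p.2) / W.u (|p.1|, p.2)| = |W.v p / W.u p| := by
  rcases abs_choice p.1 with h | h <;> rw [h]
  rw [W.v_odd, W.u_even, neg_div, abs_neg]

lemma ψ_mem_Icc {x y : ℝ} (h₁ : -W.d ≤ y) (h₂ : y ≤ W.η x) : W.ψ (x, y) ∈ Icc 0 W.m := by
  have hderiv (t : ℝ) : HasDerivAt (fun t => W.ψ (x, t)) (pdY W.ψ (x, t)) t :=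
    hasDerivAt_vertical (W.ψ_smooth.differentiable (by norm_num) _)
  have hanti : AntitoneOn (fun t => W.ψ (x, t)) (Icc (-W.d) (W.η x)) := by
    refine antitoneOn_of_deriv_nonpos (convex_Icc _ _)
      (fun t _ => (hderiv t).continuousAt.continuousWithinAt)
      (fun t _ => (hderiv t).differentiableAt.differentiableWithinAt) fun t ht => ?_
    rw [interior_Icc] at ht
    rw [(hderiv t).deriv, W.psi_y x t ht.1.le ht.2.le]
    exact (W.u_neg (p := (x, t)) ⟨ht.1.le, ht.2.le⟩).le
  constructor
  · simpa [W.psi_surface] using hanti ⟨h₁, h₂⟩ ⟨h₁.trans h₂, le_rfl⟩ h₂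
  · simpa [W.psi_bed] using hanti ⟨le_rfl, h₁.trans h₂⟩ ⟨h₁, h₂⟩ h₁

lemma incompressible_of_le {x y : ℝ} (h₁ : -W.d < y) (h₂ : y ≤ W.η x) :
    pdX W.u (x, y) + pdY W.v (x, y) = 0 :=
  isClosed_singleton.apply_mem_of_forall_mem_Ioo
    (((continuous_pdX W.u_smooth (by norm_num)).add
      (continuous_pdY W.v_smooth (by norm_num))).comp (continuous_const.prodMk continuous_id))
    h₁ fun t ht => W.incompressible x t ht.1 (ht.2.trans_le h₂)

lemma vorticity_nonpos (hγ : ∀ s ∈ Icc 0 W.m, W.γ s ≤ 0) {x y : ℝ} (h₁ : -W.d < y)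
    (h₂ : y ≤ W.η x) : pdX W.v (x, y) - pdY W.u (x, y) ≤ 0 :=
  isClosed_Iic.apply_mem_of_forall_mem_Ioo
    (((continuous_pdX W.v_smooth (by norm_num)).sub
      (continuous_pdY W.u_smooth (by norm_num))).comp (continuous_const.prodMk continuous_id))
    h₁ fun t ht => by
      have ht₂ := ht.2.trans_le h₂
      show pdX W.v (x, t) - pdY W.u (x, t) ≤ 0
      rw [W.vorticity_eq x t ht.1 ht₂]
      exact hγ _ (W.ψ_mem_Icc ht.1.le ht₂.le)

lemma IsTrivial.pdX_u_eq_zero {W : SolitaryWave g Patm} (h : W.IsTrivial) (x y : ℝ) :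
    pdX W.u (x, y) = 0 := by
  have hd := hasDerivAt_graph (W.u_smooth.differentiable (by norm_num) _) (hasDerivAt_const x y)
  simp only [h.2.2, zero_mul, add_zero] at hd
  exact hd.unique (hasDerivAt_const x _)

lemma monotoneHalf_of_pdX_u_neg (hW : W.IsTrivial ∨ W.MonotoneHalf)
    (hux : ∀ p ∈ W.Ωplus ∪ W.Splus, pdX W.u p < 0) : W.MonotoneHalf :=
  hW.resolve_left fun h => (hux (1, W.η 1) (Or.inr ⟨one_pos, rfl⟩)).ne (h.pdX_u_eq_zero 1 _)

def truncatedHalf (R : ℝ) : Set (ℝ × ℝ) := W.Ωbar ∩ {p | p.1 ∈ Icc 0 R}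

lemma isCompact_truncatedHalf (R : ℝ) : IsCompact (W.truncatedHalf R) := by
  obtain ⟨C, hC⟩ := W.η_bdd 0 (by norm_num)
  refine (isCompact_Icc (a := ((0 : ℝ), -W.d)) (b := (R, C))).of_isClosed_subset ?_ ?_
  · exact ((isClosed_le continuous_const continuous_snd).inter
      (isClosed_le continuous_snd (W.η_smooth.continuous.comp continuous_fst))).inter
      (isClosed_Icc.preimage continuous_fst)
  · rintro p ⟨⟨h₁, h₂⟩, h₃, h₄⟩
    have hη := hC p.1
    rw [iteratedDeriv_zero] at hη
    exact ⟨⟨h₃, h₁⟩, h₄, h₂.trans ((le_abs_self _).trans hη)⟩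

variable {W} {R S x y : ℝ}

lemma v_add_abs_div_mul_u_eq_zero {p : ℝ × ℝ} (hp : p ∈ W.Ωbar) (hv : 0 ≤ W.v p) :
    W.v p + |W.v p / W.u p| * W.u p = 0 := by
  have hu := W.u_neg hp
  rw [abs_div, abs_of_nonneg hv, abs_of_neg hu, div_neg, neg_mul, div_mul_cancel₀ _ hu.ne,
    add_neg_cancel]

lemma isMaxOn_v_add_mul_u {s : Set (ℝ × ℝ)} (hs : s ⊆ W.Ωbar) {p₀ : ℝ × ℝ} (hp₀ : p₀ ∈ s)
    (hmax : IsMaxOn (fun p => |W.v p / W.u p|) s p₀) (hv : 0 ≤ W.v p₀) :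
    IsMaxOn (fun p => W.v p + |W.v p₀ / W.u p₀| * W.u p) s p₀ := by
  intro p hp
  have hu := W.u_neg (hs hp)
  have hp_le : |W.v p / W.u p| ≤ |W.v p₀ / W.u p₀| := hmax hp
  rw [abs_div, abs_of_neg hu, div_le_iff₀ (neg_pos.2 hu)] at hp_le
  show W.v p + |W.v p₀ / W.u p₀| * W.u p ≤ W.v p₀ + |W.v p₀ / W.u p₀| * W.u p₀
  rw [v_add_abs_div_mul_u_eq_zero (hs hp₀) hv]
  nlinarith [le_abs_self (W.v p)]

lemma isLocalMax_of_isMaxOn_truncatedHalf {w : ℝ × ℝ → ℝ}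
    (hmax : IsMaxOn w (W.truncatedHalf R) (x, y)) (hx₀ : 0 < x) (hxR : x < R)
    (hy₁ : -W.d < y) (hy₂ : y < W.η x) : IsLocalMax w (x, y) := by
  refine hmax.isLocalMax ?_
  filter_upwards [(continuous_fst.tendsto (x, y)).eventually (lt_mem_nhds hx₀),
    (continuous_fst.tendsto (x, y)).eventually (gt_mem_nhds hxR),
    (continuous_snd.tendsto (x, y)).eventually (lt_mem_nhds hy₁),
    continuous_snd.continuousAt.eventually_lt
      (W.η_smooth.continuous.comp continuous_fst).continuousAt hy₂] with p h₁ h₂ h₃ h₄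
  exact ⟨⟨h₃.le, h₄.le⟩, h₁.le, h₂.le⟩

lemma pdX_add_deriv_η_mul_pdY_eq_zero {w : ℝ × ℝ → ℝ} (hw : DifferentiableAt ℝ w (x, W.η x))
    (hmax : IsMaxOn w (W.truncatedHalf R) (x, W.η x)) (hx₀ : 0 < x) (hxR : x < R)
    (hη : -W.d < W.η x) : pdX w (x, W.η x) + deriv W.η x * pdY w (x, W.η x) = 0 := by
  have hηd : Differentiable ℝ W.η := W.η_smooth.differentiable (by norm_num)
  have hloc : IsLocalMax (fun t => w (t, W.η t)) x := by
    filter_upwards [lt_mem_nhds hx₀, gt_mem_nhds hxR,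
      continuousAt_const.eventually_lt hηd.continuous.continuousAt hη] with t h₁ h₂ h₃
    exact hmax ⟨⟨h₃.le, le_rfl⟩, h₁.le, h₂.le⟩
  exact hloc.hasDerivAt_eq_zero (hasDerivAt_graph hw (hηd x).hasDerivAt)

lemma pdX_eq_mul_pdY_and_pdY_nonneg_of_isMaxOn
    (hmax : IsMaxOn (fun p => W.v p + S * W.u p) (W.truncatedHalf R) (x, y))
    (hzero : W.v (x, y) + S * W.u (x, y) = 0) (hx₀ : 0 < x) (hxR : x < R) (hy₁ : -W.d < y)
    (hy₂ : y ≤ W.η x) :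
    pdX W.v (x, y) + S * pdX W.u (x, y) = S * (pdY W.v (x, y) + S * pdY W.u (x, y)) ∧
      0 ≤ pdY W.v (x, y) + S * pdY W.u (x, y) := by
  have hvd : Differentiable ℝ W.v := W.v_smooth.differentiable (by norm_num)
  have hud : Differentiable ℝ W.u := W.u_smooth.differentiable (by norm_num)
  have hw : Differentiable ℝ fun p => W.v p + S * W.u p := hvd.add (hud.const_mul S)
  have hfderiv : fderiv ℝ (fun p => W.v p + S * W.u p) (x, y) =
      fderiv ℝ W.v (x, y) + S • fderiv ℝ W.u (x, y) :=
    ((hvd _).hasFDerivAt.add ((hud _).hasFDerivAt.const_mul S)).fderiv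
  have hpdX : pdX (fun p => W.v p + S * W.u p) (x, y) = pdX W.v (x, y) + S * pdX W.u (x, y) := by
    simp [pdX, hfderiv]
  have hpdY : pdY (fun p => W.v p + S * W.u p) (x, y) = pdY W.v (x, y) + S * pdY W.u (x, y) := by
    simp [pdY, hfderiv]
  rw [← hpdX, ← hpdY]
  rcases hy₂.lt_or_eq with hlt | rfl
  · have h := (isLocalMax_of_isMaxOn_truncatedHalf hmax hx₀ hxR hy₁ hlt).fderiv_eq_zero
    simp [pdX, pdY, h]
  · refine ⟨?_, pdY_nonneg_of_isMaxOn (s := W.truncatedHalf R) hy₁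
      (fun t ht => ⟨ht, hx₀.le, hxR.le⟩) (hw _) hmax⟩
    have htan := pdX_add_deriv_η_mul_pdY_eq_zero (hw _) hmax hx₀ hxR hy₁
    have hslope : deriv W.η x = -S := by
      have hk := W.surface_kinematic x
      have hu := W.u_neg (p := (x, W.η x)) ⟨hy₁.le, le_rfl⟩
      exact mul_right_cancel₀ hu.ne (by linarith)
    rw [hslope] at htan
    linarith

lemma abs_v_div_u_lt_one_of_isMaxOn (hγ : ∀ s ∈ Icc 0 W.m, W.γ s ≤ 0)
    (hmono : W.MonotoneHalf) (hux : ∀ p ∈ W.Ωplus ∪ W.Splus, pdX W.u p < 0)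
    (hR : ∀ p ∈ W.Ωbar, R ≤ |p.1| → |W.v p / W.u p| < 1) {p₀ : ℝ × ℝ}
    (hp₀ : p₀ ∈ W.truncatedHalf R)
    (hmax : IsMaxOn (fun p => |W.v p / W.u p|) (W.truncatedHalf R) p₀) :
    |W.v p₀ / W.u p₀| < 1 := by
  obtain ⟨x, y⟩ := p₀
  obtain ⟨⟨hy₁, hy₂⟩, hx₁, hx₂⟩ := id hp₀
  by_contra! hS
  have hx₀ : 0 < x := hx₁.lt_of_ne fun h => by subst h; norm_num [v_zero_fst] at hS
  have hxR : x < R := hx₂.lt_of_ne fun h =>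
    (hR _ ⟨hy₁, hy₂⟩ (h.ge.trans (le_abs_self x))).not_ge hS
  have hyd : -W.d < y := hy₁.lt_of_ne fun h => by subst h; norm_num [W.bed_kinematic] at hS
  have hmem : (x, y) ∈ W.Ωplus ∪ W.Splus := by
    rcases hy₂.lt_or_eq with h | h
    exacts [Or.inl ⟨hx₀, hyd, h⟩, Or.inr ⟨hx₀, h⟩]
  have hv := (hmono _ hmem).le
  obtain ⟨htan, hnormal⟩ := pdX_eq_mul_pdY_and_pdY_nonneg_of_isMaxOn
    (isMaxOn_v_add_mul_u inter_subset_left hp₀ hmax hv)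
    (v_add_abs_div_mul_u_eq_zero hp₀.1 hv) hx₀ hxR hyd hy₂
  exact (hux _ hmem).not_ge (nonneg_of_slope_conditions hS (W.incompressible_of_le hyd hy₂)
    (W.vorticity_nonpos hγ hyd hy₂) htan hnormal)

end SolitaryWave

theorem solitary_slope_sup_lt_one_general (g Patm : ℝ)
    (W : SolitaryWave g Patm) (hMW : W.MemW)
    (hux : ∀ p ∈ W.Ωplus ∪ W.Splus, pdX W.u p < 0) :
    ∃ c < (1:ℝ), ∀ p ∈ W.Ωbar, |W.v p / W.u p| ≤ c := by
  have hmono := W.monotoneHalf_of_pdX_u_neg hMW.2.2.2 hux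
  obtain ⟨R, hR⟩ := W.exists_abs_v_div_u_le (ε := 1 / 2) (by norm_num)
  obtain ⟨c, hc, hcK⟩ := (W.isCompact_truncatedHalf R).exists_lt_forall_le
    (W.continuousOn_abs_v_div_u.mono inter_subset_left) fun p₀ hp₀ hmax =>
      SolitaryWave.abs_v_div_u_lt_one_of_isMaxOn hMW.1 hmono hux
        (fun p hp hpR => (hR p hp hpR).trans_lt (by norm_num)) hp₀ hmax
  refine ⟨max c (1 / 2), max_lt hc (by norm_num), fun p hp => ?_⟩
  rw [← W.abs_v_div_u_abs_fst p]
  rcases le_or_gt R |p.1| with hpR | hpR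
  · exact (hR _ (W.mem_Ωbar_abs_fst hp) (by rwa [abs_abs])).trans (le_max_right _ _)
  · exact (hcK _ ⟨W.mem_Ωbar_abs_fst hp, abs_nonneg _, hpR.le⟩).trans (le_max_left _ _)

/-- **Lemma (slope bound from `u_x < 0`, solitary case).**  If a solitary wave in `𝒲`
satisfies `u_x < 0` everywhere on `Ω⁺ ∪ S⁺`, then the supremum of `|v/u|` over the closure
of `Ω` is strictly less than `1`. -/
theorem solitary_slope_sup_lt_one (g Patm : ℝ) (hg : 0 < g)
    (W : SolitaryWave g Patm) (hMW : W.MemW)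
    (hux : ∀ p ∈ W.Ωplus ∪ W.Splus, pdX W.u p < 0) :
    ∃ c < (1:ℝ), ∀ p ∈ W.Ωbar, |W.v p / W.u p| ≤ c :=
  solitary_slope_sup_lt_one_general g Patm W hMW hux
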